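/- Let N ≥ 1 and let P be a polynomial in N complex variables of total degree at least 2. Then there is no integrable function f : ℝ^N → ℂ with compact support whose Fourier transform satisfies 𝓕f(k) = exp(−P(k)) for all k ∈ ℝ^N. (That is, if f₁ = 𝓕^{−1}{exp(−P)} is a Schwartz function, then f₁ cannot have compact support.) -/

import Mathlib

/-!
Choose a real direction `v` on which the top homogeneous part of `P` does not vanish, so that
`q(z) = P(z v)` is a polynomial of degree `n ≥ 2`. Since `f` has compact support,
`z ↦ ∫ e^{i z ⟨v, x⟩} f(x) dx` is an entire function of exponential type, and by the identity
theorem it agrees with `c exp(-q(z))` on all of `ℂ`, not only on `ℝ`. Along a ray on which the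
leading term of `q` is real and negative, however, `|exp(-q(z))|` grows like `exp(C |z|ⁿ)`,
faster than any exponential.
-/

open MeasureTheory
open scoped RealInnerProductSpace

/-- The Fourier transform `𝓕f(k) = (2π)^{-N/2} ∫ e^{i k·x} f(x) dx` used in the paper. -/
noncomputable def paperFourier {N : ℕ} (f : EuclideanSpace ℝ (Fin N) → ℂ)
    (k : EuclideanSpace ℝ (Fin N)) : ℂ :=
  (((2 * Real.pi) ^ (-(N : ℝ) / 2) : ℝ) : ℂ) *
    ∫ x : EuclideanSpace ℝ (Fin N), Complex.exp (Complex.I * (⟪k, x⟫ : ℝ)) * f x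

namespace MvPolynomial

variable {R σ : Type*} [CommSemiring R]

theorem coeff_aeval_C_mul_X (x : σ → R) (P : MvPolynomial σ R) (d : ℕ) :
    (aeval (fun j => Polynomial.C (x j) * Polynomial.X) P).coeff d =
      eval x (homogeneousComponent d P) := by
  conv_lhs => rw [P.as_sum]
  rw [map_sum, Polynomial.finsetSum_coeff, homogeneousComponent_apply, map_sum,
    Finset.sum_filter]
  refine Finset.sum_congr rfl fun m _ => ?_
  have hprod : (m.prod fun j k => (Polynomial.C (x j) * Polynomial.X) ^ k) =
      Polynomial.C (m.prod fun j k => x j ^ k) * Polynomial.X ^ m.degree := by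
    rw [Finsupp.prod, Finsupp.prod, Finsupp.degree_apply, map_prod,
      ← Finset.prod_pow_eq_pow_sum, ← Finset.prod_mul_distrib]
    exact Finset.prod_congr rfl fun j _ => by rw [mul_pow, Polynomial.C_pow]
  rw [aeval_monomial, hprod, ← mul_assoc, Polynomial.algebraMap_eq, ← Polynomial.C_mul,
    Polynomial.coeff_C_mul, Polynomial.coeff_X_pow]
  by_cases hd : m.degree = d
  · simp [hd, eval_monomial]
  · simp [hd, Ne.symm hd]

theorem homogeneousComponent_totalDegree_ne_zero {P : MvPolynomial σ R} (hP : P ≠ 0) :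
    homogeneousComponent P.totalDegree P ≠ 0 := by
  obtain ⟨m, hm, hdeg⟩ := Finset.exists_mem_eq_sup P.support (support_nonempty.2 hP)
    fun s => s.sum fun _ e => e
  intro h
  have := congrArg (coeff m) h
  rw [coeff_homogeneousComponent, if_pos (by rw [totalDegree, hdeg]; rfl), coeff_zero] at this
  exact mem_support_iff.mp hm this

theorem exists_real_eval_ne_zero {p : MvPolynomial σ ℂ} (hp : p ≠ 0) :
    ∃ v : σ → ℝ, eval (fun j => (v j : ℂ)) p ≠ 0 := by
  by_contra! h
  refine hp (funext_set (fun _ => Set.range Complex.ofReal)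
    (fun _ => Set.infinite_range_of_injective Complex.ofReal_injective) fun x hx => ?_)
  choose v hv using fun j => hx j (Set.mem_univ j)
  obtain rfl : (fun j => (v j : ℂ)) = x := _root_.funext hv
  simpa using h v

theorem exists_real_line_restriction (P : MvPolynomial σ ℂ) :
    ∃ v : σ → ℝ, ∃ q : Polynomial ℂ, P.totalDegree ≤ q.natDegree ∧
      ∀ z, q.eval z = eval (fun j => (v j : ℂ) * z) P := by
  rcases eq_or_ne P 0 with rfl | hP
  · exact ⟨0, 0, by simp, by simp⟩
  obtain ⟨v, hv⟩ := exists_real_eval_ne_zero (homogeneousComponent_totalDegree_ne_zero hP)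
  refine ⟨v, aeval (fun j => Polynomial.C (v j : ℂ) * Polynomial.X) P, ?_, fun z => ?_⟩
  · exact Polynomial.le_natDegree_of_ne_zero (by rwa [coeff_aeval_C_mul_X])
  · rw [← Polynomial.coe_aeval_eq_eval, comp_aeval_apply]
    simp only [Polynomial.aeval_mul, Polynomial.aeval_C, Polynomial.aeval_X,
      Algebra.algebraMap_self, RingHom.id_apply, aeval_eq_eval]

end MvPolynomial

theorem Complex.exists_norm_eq_one_mul_pow_eq_neg_norm {a : ℂ} (ha : a ≠ 0) {n : ℕ}
    (hn : n ≠ 0) : ∃ w : ℂ, ‖w‖ = 1 ∧ a * w ^ n = -‖a‖ := by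
  obtain ⟨w, hw⟩ := IsAlgClosed.exists_pow_nat_eq (-‖a‖ / a : ℂ) (Nat.pos_of_ne_zero hn)
  refine ⟨w, (pow_eq_one_iff_of_nonneg (norm_nonneg w) hn).mp ?_, ?_⟩
  · rw [← norm_pow, hw, norm_div, norm_neg, Complex.norm_real, norm_norm,
      div_self (norm_ne_zero_iff.mpr ha)]
  · rw [hw, mul_div_cancel₀ _ ha]

theorem exists_lt_mul_pow_sub_mul_pow {A : ℝ} (hA : 0 < A) {n : ℕ} (hn : 2 ≤ n) (S C K : ℝ) :
    ∃ r : ℝ, 1 ≤ r ∧ C + K * r < A * r ^ n - S * r ^ (n - 1) := by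
  set M := |S| + |C| + |K| + 1
  refine ⟨max 1 (M / A), le_max_left _ _, ?_⟩
  set r := max 1 (M / A)
  have hr : 1 ≤ r := le_max_left _ _
  have hAr : M ≤ A * r := by
    rw [← div_le_iff₀' hA]; exact le_max_right _ _
  have hpow : r ≤ r ^ (n - 1) := le_self_pow₀ hr (by omega)
  have hsplit : A * r ^ n - S * r ^ (n - 1) = r ^ (n - 1) * (A * r - S) := by
    obtain ⟨m, rfl⟩ : ∃ m, n = m + 1 := ⟨n - 1, by omega⟩
    simp only [Nat.add_sub_cancel]
    ring
  rw [hsplit]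
  have hmono : r * (A * r - S) ≤ r ^ (n - 1) * (A * r - S) :=
    mul_le_mul_of_nonneg_right hpow (by linarith [le_abs_self S, abs_nonneg C, abs_nonneg K])
  nlinarith [le_abs_self S, le_abs_self C, le_abs_self K, abs_nonneg C, abs_nonneg K]

namespace Polynomial

theorem norm_eval_sub_leadingCoeff_mul_pow_le (q : ℂ[X]) {z : ℂ} (hz : 1 ≤ ‖z‖) :
    ‖q.eval z - q.leadingCoeff * z ^ q.natDegree‖ ≤
      (∑ j ∈ Finset.range q.natDegree, ‖q.coeff j‖) * ‖z‖ ^ (q.natDegree - 1) := by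
  rw [eval_eq_sum_range, Finset.sum_range_succ, leadingCoeff, add_sub_cancel_right,
    Finset.sum_mul]
  refine (norm_sum_le _ _).trans (Finset.sum_le_sum fun j hj => ?_)
  rw [norm_mul, norm_pow]
  gcongr
  exact Nat.le_sub_one_of_lt (Finset.mem_range.mp hj)

theorem exists_ray_neg_re_eval_ge (q : ℂ[X]) (hq : q.natDegree ≠ 0) :
    ∃ w : ℂ, ‖w‖ = 1 ∧ ∀ r : ℝ, 1 ≤ r →
      ‖q.leadingCoeff‖ * r ^ q.natDegree -
          (∑ j ∈ Finset.range q.natDegree, ‖q.coeff j‖) * r ^ (q.natDegree - 1) ≤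
        -(q.eval (r * w)).re := by
  have hq0 : q ≠ 0 := by rintro rfl; exact hq natDegree_zero
  obtain ⟨w, hw, hlead⟩ :=
    Complex.exists_norm_eq_one_mul_pow_eq_neg_norm (leadingCoeff_ne_zero.mpr hq0) hq
  refine ⟨w, hw, fun r hr => ?_⟩
  have hnorm : ‖(r : ℂ) * w‖ = r := by
    rw [norm_mul, hw, mul_one, Complex.norm_real, Real.norm_of_nonneg (by linarith)]
  have htop : q.leadingCoeff * ((r : ℂ) * w) ^ q.natDegree =
      ((-(‖q.leadingCoeff‖ * r ^ q.natDegree) : ℝ) : ℂ) := by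
    rw [mul_pow, mul_left_comm, hlead]
    push_cast
    ring
  have hrest := q.norm_eval_sub_leadingCoeff_mul_pow_le (z := r * w) (by rwa [hnorm])
  rw [hnorm, htop] at hrest
  have hre := (Complex.re_le_norm _).trans hrest
  rw [Complex.sub_re, Complex.ofReal_re] at hre
  linarith

theorem not_forall_norm_cexp_neg_eval_le {q : ℂ[X]} (hq : 2 ≤ q.natDegree)
    (B K : ℝ) : ¬ ∀ z : ℂ, ‖Complex.exp (-q.eval z)‖ ≤ B * Real.exp (K * ‖z‖) := by
  intro h
  have hB : 0 < B := pos_of_mul_pos_left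
    ((norm_pos_iff.mpr (Complex.exp_ne_zero _)).trans_le (h 0)) (Real.exp_pos _).le
  have hq0 : q ≠ 0 := by rintro rfl; simp at hq
  obtain ⟨w, hw, hray⟩ := q.exists_ray_neg_re_eval_ge (by omega)
  obtain ⟨r, hr, hlt⟩ := exists_lt_mul_pow_sub_mul_pow
    (norm_pos_iff.mpr (leadingCoeff_ne_zero.mpr hq0)) hq
    (∑ j ∈ Finset.range q.natDegree, ‖q.coeff j‖) (Real.log B) K
  have hle : -(q.eval (r * w)).re ≤ Real.log B + K * r := by
    have := h (r * w)
    rwa [Complex.norm_exp, Complex.neg_re, norm_mul, hw, mul_one, Complex.norm_real,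
      Real.norm_of_nonneg (by linarith), ← Real.exp_log hB, ← Real.exp_add,
      Real.exp_le_exp] at this
  linarith [hray r hr]

end Polynomial

theorem Complex.norm_exp_I_mul_ofReal_mul_le (t : ℝ) (z : ℂ) :
    ‖Complex.exp (Complex.I * t * z)‖ ≤ Real.exp (|t| * ‖z‖) := by
  rw [Complex.norm_exp, Real.exp_le_exp]
  have hre : (Complex.I * t * z).re = -(t * z.im) := by simp [Complex.mul_re]
  rw [hre]
  refine (neg_le_abs _).trans ?_
  rw [abs_mul]
  exact mul_le_mul_of_nonneg_left (Complex.abs_im_le_norm z) (abs_nonneg t)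

section FourierLaplace

variable {α : Type*} {f : α → ℂ} {g : α → ℝ} {L : ℝ}

theorem norm_cexp_I_mul_mul_le (hL : ∀ a ∈ Function.support f, |g a| ≤ L) (z : ℂ) (a : α) :
    ‖Complex.exp (Complex.I * g a * z) * f a‖ ≤ Real.exp (L * ‖z‖) * ‖f a‖ := by
  by_cases hf : f a = 0
  · simp [hf]
  rw [norm_mul]
  gcongr
  exact (Complex.norm_exp_I_mul_ofReal_mul_le _ z).trans
    (Real.exp_le_exp.mpr (mul_le_mul_of_nonneg_right (hL a hf) (norm_nonneg z)))

variable [MeasurableSpace α] {μ : Measure α}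

theorem aestronglyMeasurable_cexp_I_mul_mul (hf : Integrable f μ)
    (hg : AEStronglyMeasurable g μ) (z : ℂ) :
    AEStronglyMeasurable (fun a => Complex.exp (Complex.I * g a * z) * f a) μ :=
  (Complex.continuous_exp.comp_aestronglyMeasurable
    (((Complex.continuous_ofReal.comp_aestronglyMeasurable hg).const_mul _).mul_const z)).mul
    hf.1

theorem integrable_cexp_I_mul_mul (hf : Integrable f μ) (hg : AEStronglyMeasurable g μ)
    (hL : ∀ a ∈ Function.support f, |g a| ≤ L) (z : ℂ) :
    Integrable (fun a => Complex.exp (Complex.I * g a * z) * f a) μ :=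
  (hf.norm.const_mul _).mono' (aestronglyMeasurable_cexp_I_mul_mul hf hg z)
    (.of_forall (norm_cexp_I_mul_mul_le hL z))

theorem norm_integral_cexp_I_mul_mul_le (hf : Integrable f μ)
    (hL : ∀ a ∈ Function.support f, |g a| ≤ L) (z : ℂ) :
    ‖∫ a, Complex.exp (Complex.I * g a * z) * f a ∂μ‖ ≤
      (∫ a, ‖f a‖ ∂μ) * Real.exp (L * ‖z‖) := by
  rw [mul_comm, ← integral_const_mul]
  exact norm_integral_le_of_norm_le (hf.norm.const_mul _)
    (.of_forall (norm_cexp_I_mul_mul_le hL z))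

theorem differentiable_integral_cexp_I_mul_mul (hf : Integrable f μ)
    (hg : AEStronglyMeasurable g μ) (hL : ∀ a ∈ Function.support f, |g a| ≤ L) (hL0 : 0 ≤ L) :
    Differentiable ℂ fun z => ∫ a, Complex.exp (Complex.I * g a * z) * f a ∂μ := by
  intro z₀
  have hIg : AEStronglyMeasurable (fun a => Complex.I * g a) μ :=
    (Complex.continuous_ofReal.comp_aestronglyMeasurable hg).const_mul _
  have hderiv (a : α) (z : ℂ) : HasDerivAt (fun z => Complex.exp (Complex.I * g a * z) * f a)
      (Complex.exp (Complex.I * g a * z) * (Complex.I * g a) * f a) z :=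
    (((hasDerivAt_id z).const_mul (Complex.I * g a)).cexp.mul_const (f a)).congr_deriv
      (by simp)
  have hbound (a : α) (z : ℂ) (hz : z ∈ Metric.ball z₀ 1) :
      ‖Complex.exp (Complex.I * g a * z) * (Complex.I * g a) * f a‖ ≤
        Real.exp (L * (‖z₀‖ + 1)) * (L * ‖f a‖) := by
    by_cases hfa : f a = 0
    · simp [hfa]
    have hga := hL a hfa
    have hz' : ‖z‖ ≤ ‖z₀‖ + 1 :=
      (norm_le_norm_add_norm_sub' z z₀).trans (by linarith [mem_ball_iff_norm.mp hz])
    rw [norm_mul, norm_mul, ← mul_assoc]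
    gcongr
    · exact (Complex.norm_exp_I_mul_ofReal_mul_le _ z).trans
        (Real.exp_le_exp.mpr (mul_le_mul hga hz' (norm_nonneg z) hL0))
    · simpa using hga
  refine (hasDerivAt_integral_of_dominated_loc_of_deriv_le (Metric.ball_mem_nhds z₀ one_pos)
    (.of_forall (aestronglyMeasurable_cexp_I_mul_mul hf hg))
    (integrable_cexp_I_mul_mul hf hg hL z₀)
    (((Complex.continuous_exp.comp_aestronglyMeasurable (hIg.mul_const z₀)).mul hIg).mul hf.1)
    (.of_forall hbound) ((hf.norm.const_mul L).const_mul _)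
    (.of_forall fun a z _ => hderiv a z)).2.differentiableAt

end FourierLaplace

theorem Complex.eq_of_forall_ofReal_eq {F G : ℂ → ℂ} (hF : Differentiable ℂ F)
    (hG : Differentiable ℂ G) (h : ∀ t : ℝ, F t = G t) : F = G := by
  have hreal : Filter.Tendsto Complex.ofReal (nhdsWithin 0 {0}ᶜ) (nhdsWithin 0 {0}ᶜ) :=
    Complex.continuous_ofReal.continuousWithinAt.tendsto_nhdsWithin fun t ht => by simpa using ht
  exact AnalyticOnNhd.eq_of_frequently_eq (fun z _ => hF.analyticAt z)
    (fun z _ => hG.analyticAt z) (hreal.frequently (Filter.Frequently.of_forall h))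

theorem not_forall_integral_cexp_I_mul_mul_eq_cexp_neg_eval {α : Type*} [MeasurableSpace α]
    {μ : Measure α} {f : α → ℂ} {g : α → ℝ} {L : ℝ} (hf : Integrable f μ)
    (hg : AEStronglyMeasurable g μ) (hL : ∀ a ∈ Function.support f, |g a| ≤ L) (hL0 : 0 ≤ L)
    {q : Polynomial ℂ} (hq : 2 ≤ q.natDegree) (c : ℂ) :
    ¬ ∀ t : ℝ,
      c * ∫ a, Complex.exp (Complex.I * g a * t) * f a ∂μ = Complex.exp (-q.eval ↑t) := by
  intro h
  have hext : (fun z : ℂ => c * ∫ a, Complex.exp (Complex.I * g a * z) * f a ∂μ) =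
      fun z => Complex.exp (-q.eval z) := Complex.eq_of_forall_ofReal_eq
    ((differentiable_integral_cexp_I_mul_mul hf hg hL hL0).const_mul c)
    q.differentiable.neg.cexp h
  refine q.not_forall_norm_cexp_neg_eval_le hq (‖c‖ * ∫ a, ‖f a‖ ∂μ) L fun z => ?_
  rw [← congrFun hext z, norm_mul, mul_assoc]
  exact mul_le_mul_of_nonneg_left (norm_integral_cexp_I_mul_mul_le hf hL z) (norm_nonneg c)

theorem paperFourier_smul {N : ℕ} (f : EuclideanSpace ℝ (Fin N) → ℂ) (t : ℝ)
    (k : EuclideanSpace ℝ (Fin N)) :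
    paperFourier f (t • k) = (((2 * Real.pi) ^ (-(N : ℝ) / 2) : ℝ) : ℂ) *
      ∫ x, Complex.exp (Complex.I * (⟪k, x⟫ : ℝ) * t) * f x := by
  simp only [paperFourier, real_inner_smul_left, Complex.ofReal_mul, mul_comm (t : ℂ),
    mul_assoc]

theorem stmt_6 (N : ℕ) (P : MvPolynomial (Fin N) ℂ)
    (hdeg : 2 ≤ P.totalDegree) :
    ¬ ∃ f : EuclideanSpace ℝ (Fin N) → ℂ, Integrable f ∧ HasCompactSupport f ∧
      ∀ k : EuclideanSpace ℝ (Fin N),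
        paperFourier f k =
          Complex.exp (-(MvPolynomial.eval (fun j => (k j : ℂ)) P)) := by
  rintro ⟨f, hf, hcs, hFT⟩
  obtain ⟨v, q, hPq, hq⟩ := P.exists_real_line_restriction
  obtain ⟨R, hR0, hR⟩ := hcs.isCompact.isBounded.subset_closedBall_lt 0 0
  set k : EuclideanSpace ℝ (Fin N) := WithLp.toLp 2 v
  have hL : ∀ x ∈ Function.support f, |⟪k, x⟫| ≤ ‖k‖ * R := fun x hx =>
    (abs_real_inner_le_norm k x).trans <| mul_le_mul_of_nonneg_left
      (by simpa using hR (subset_tsupport f hx)) (norm_nonneg k)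
  refine not_forall_integral_cexp_I_mul_mul_eq_cexp_neg_eval (g := fun x => ⟪k, x⟫) hf
    (continuous_const.inner continuous_id).aestronglyMeasurable hL (by positivity)
    (hdeg.trans hPq) (((2 * Real.pi) ^ (-(N : ℝ) / 2) : ℝ) : ℂ) fun t => ?_
  rw [(paperFourier_smul f t k).symm.trans (hFT _), hq]
  simp [k, mul_comm]
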